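/- Suppose 𝒜 satisfies RIP(2r, δ). Then for every X, D ∈ ℝ^{n×r} and every α > 0, f_c(X − αD) ≤ f_c(X) − α⟨G, D⟩ + (α²/2)·Q(D) + (1+δ)·α³·‖D‖_F²·( 2‖DXᵀ + XDᵀ‖_F + α‖D‖_F² ), where G = ∇f_c(X) = (4/m) Σ_{i=1}^m ⟨A_i, XXᵀ − M*⟩ A_i X and Q(D) = (2/m)( ‖𝒜(XDᵀ + DXᵀ)‖² + 2⟨𝒜(XXᵀ − M*), 𝒜(DDᵀ)⟩ ). -/

import Mathlib

open Matrix BigOperators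

noncomputable section

/-- Frobenius inner product `⟨A, B⟩ = tr(Aᵀ B)`. -/
def finner {a b : ℕ} (A B : Matrix (Fin a) (Fin b) ℝ) : ℝ := (Aᵀ * B).trace

/-- Frobenius norm. -/
def fnorm {a b : ℕ} (A : Matrix (Fin a) (Fin b) ℝ) : ℝ :=
  Real.sqrt (∑ i, ∑ j, (A i j) ^ 2)

/-- Euclidean norm on ℝ^m. -/
def vnorm {m : ℕ} (v : Fin m → ℝ) : ℝ := Real.sqrt (∑ i, (v i) ^ 2)

/-- Euclidean inner product on ℝ^m. -/
def vinner {m : ℕ} (v w : Fin m → ℝ) : ℝ := ∑ i, v i * w i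

/-- Measurement operator 𝒜(M)_i = ⟨A_i, M⟩. -/
def calA {n m : ℕ} (A : Fin m → Matrix (Fin n) (Fin n) ℝ)
    (M : Matrix (Fin n) (Fin n) ℝ) : Fin m → ℝ :=
  fun i => finner (A i) M

/-- Restricted isometry property with parameters (k, δ). -/
def RIP {n m : ℕ} (A : Fin m → Matrix (Fin n) (Fin n) ℝ) (k : ℕ) (δ : ℝ) : Prop :=
  0 ≤ δ ∧ δ < 1 ∧ ∀ M : Matrix (Fin n) (Fin n) ℝ, M.rank ≤ k →
    (1 - δ) * fnorm M ^ 2 ≤ (1 / (m : ℝ)) * vnorm (calA A M) ^ 2 ∧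
    (1 / (m : ℝ)) * vnorm (calA A M) ^ 2 ≤ (1 + δ) * fnorm M ^ 2

/-- Noiseless loss. -/
def fc {n m r : ℕ} (A : Fin m → Matrix (Fin n) (Fin n) ℝ)
    (Mstar : Matrix (Fin n) (Fin n) ℝ) (X : Matrix (Fin n) (Fin r) ℝ) : ℝ :=
  (1 / (m : ℝ)) * vnorm (calA A (X * Xᵀ - Mstar)) ^ 2

/-- Noisy loss. -/
def fnoisy {n m r : ℕ} (A : Fin m → Matrix (Fin n) (Fin n) ℝ) (y : Fin m → ℝ)
    (X : Matrix (Fin n) (Fin r) ℝ) : ℝ :=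
  (1 / (m : ℝ)) * vnorm (fun i => calA A (X * Xᵀ) i - y i) ^ 2

/-- Gradient of the noisy loss. -/
def gradf {n m r : ℕ} (A : Fin m → Matrix (Fin n) (Fin n) ℝ) (y : Fin m → ℝ)
    (X : Matrix (Fin n) (Fin r) ℝ) : Matrix (Fin n) (Fin r) ℝ :=
  (4 / (m : ℝ)) • ∑ i, (finner (A i) (X * Xᵀ) - y i) • (A i * X)

/-- Gradient of the noiseless loss. -/
def gradfc {n m r : ℕ} (A : Fin m → Matrix (Fin n) (Fin n) ℝ)
    (Mstar : Matrix (Fin n) (Fin n) ℝ) (X : Matrix (Fin n) (Fin r) ℝ) :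
    Matrix (Fin n) (Fin r) ℝ :=
  (4 / (m : ℝ)) • ∑ i, finner (A i) (X * Xᵀ - Mstar) • (A i * X)

/-- Spectral (operator) norm. -/
def specNorm {n : ℕ} (B : Matrix (Fin n) (Fin n) ℝ) : ℝ :=
  sSup {c | ∃ v : Fin n → ℝ, vnorm v ≤ 1 ∧ c = vnorm (B.mulVec v)}

open scoped Classical in
/-- positive semidefinite square root (junk value 0 if not PSD). -/
def matSqrt {k : ℕ} (P : Matrix (Fin k) (Fin k) ℝ) : Matrix (Fin k) (Fin k) ℝ :=
  if h : P.PosSemidef then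
    h.1.eigenvectorUnitary.1 * diagonal ((↑) ∘ (√·) ∘ h.1.eigenvalues) *
      (star h.1.eigenvectorUnitary : Matrix (Fin k) (Fin k) ℝ)
  else 0

/-- P-norm. -/
def pnorm {a k : ℕ} (P : Matrix (Fin k) (Fin k) ℝ) (X : Matrix (Fin a) (Fin k) ℝ) : ℝ :=
  fnorm (X * matSqrt P)

/-- dual P-norm. -/
def pdnorm {a k : ℕ} (P : Matrix (Fin k) (Fin k) ℝ) (X : Matrix (Fin a) (Fin k) ℝ) : ℝ :=
  fnorm (X * (matSqrt P)⁻¹)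

/-- the preconditioner matrix XᵀX + ηI. -/
def Pmat {n r : ℕ} (X : Matrix (Fin n) (Fin r) ℝ) (η : ℝ) : Matrix (Fin r) (Fin r) ℝ :=
  Xᵀ * X + η • 1

/-- k-th largest eigenvalue (1-indexed) of a Hermitian matrix. -/
def lamK {n : ℕ} {M : Matrix (Fin n) (Fin n) ℝ} (hM : M.IsHermitian) (k : ℕ) : ℝ :=
  (((List.ofFn hM.eigenvalues).insertionSort (· ≥ ·)).getD (k - 1) 0)


/-!
Since `(X - αD)(X - αD)ᵀ - M* = (XXᵀ - M*) - α(XDᵀ + DXᵀ) + α²DDᵀ`, the loss `f_c(X - αD)` is a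
quartic polynomial in `α`; by symmetry of the `A_i` its linear coefficient is `-⟨∇f_c(X), D⟩`,
and its quadratic one is `Q(D)/2`. Both `XDᵀ + DXᵀ` and `DDᵀ` have rank at most `2r`, so RIP
together with Cauchy–Schwarz bounds the cubic and quartic coefficients, and `‖DDᵀ‖_F ≤ ‖D‖_F²`.
-/

section Vectors

variable {m : ℕ}

lemma vnorm_sq (v : Fin m → ℝ) : vnorm v ^ 2 = ∑ i, v i ^ 2 :=
  Real.sq_sqrt (Finset.sum_nonneg fun _ _ => sq_nonneg _)

lemma vnorm_nonneg (v : Fin m → ℝ) : 0 ≤ vnorm v :=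
  Real.sqrt_nonneg _

lemma abs_vinner_le_vnorm_mul_vnorm (v w : Fin m → ℝ) : |vinner v w| ≤ vnorm v * vnorm w :=
  (Real.abs_le_sqrt (Finset.sum_mul_sq_le_sq_mul_sq _ v w)).trans_eq
    (Real.sqrt_mul (Finset.sum_nonneg fun _ _ => sq_nonneg _) _)

lemma vnorm_sub_smul_add_smul_sq (a b c : Fin m → ℝ) (t : ℝ) :
    vnorm (a - t • b + t ^ 2 • c) ^ 2 =
      vnorm a ^ 2 - 2 * t * vinner a b + t ^ 2 * (vnorm b ^ 2 + 2 * vinner a c)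
        - 2 * t ^ 3 * vinner b c + t ^ 4 * vnorm c ^ 2 := by
  simp only [vnorm_sq, vinner, Finset.mul_sum, ← Finset.sum_add_distrib, ← Finset.sum_sub_distrib]
  refine Finset.sum_congr rfl fun i _ => ?_
  simp only [Pi.add_apply, Pi.sub_apply, Pi.smul_apply, smul_eq_mul]
  ring

end Vectors

section Matrices

variable {n m r : ℕ}

lemma fnorm_nonneg {a b : ℕ} (M : Matrix (Fin a) (Fin b) ℝ) : 0 ≤ fnorm M :=
  Real.sqrt_nonneg _

lemma fnorm_eq_frobenius_norm {a b : ℕ} (M : Matrix (Fin a) (Fin b) ℝ) :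
    fnorm M = @norm _ Matrix.frobeniusNormedAddCommGroup.toNorm M := by
  rw [fnorm, Matrix.frobenius_norm_def, Real.sqrt_eq_rpow]
  simp [Real.norm_eq_abs, sq_abs]

lemma fnorm_mul_transpose_le (D : Matrix (Fin n) (Fin r) ℝ) : fnorm (D * Dᵀ) ≤ fnorm D ^ 2 := by
  simpa [fnorm_eq_frobenius_norm, sq] using Matrix.frobenius_norm_mul D Dᵀ

lemma finner_smul_left {a b : ℕ} (s : ℝ) (P N : Matrix (Fin a) (Fin b) ℝ) :
    finner (s • P) N = s * finner P N := by
  simp [finner, Matrix.transpose_smul, Matrix.smul_mul]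

lemma finner_sum_left {a b : ℕ} {ι : Type*} (s : Finset ι)
    (P : ι → Matrix (Fin a) (Fin b) ℝ) (N : Matrix (Fin a) (Fin b) ℝ) :
    finner (∑ i ∈ s, P i) N = ∑ i ∈ s, finner (P i) N := by
  simp [finner, Matrix.transpose_sum, Matrix.sum_mul, Matrix.trace_sum]

lemma finner_mul_transpose_add {S : Matrix (Fin n) (Fin n) ℝ} (hS : S.IsHermitian)
    (X D : Matrix (Fin n) (Fin r) ℝ) :
    finner S (X * Dᵀ + D * Xᵀ) = 2 * finner (S * X) D := by
  have hS' : Sᵀ = S := hS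
  have h2 : (S * (D * Xᵀ)).trace = (Xᵀ * S * D).trace := by
    rw [← Matrix.mul_assoc, Matrix.trace_mul_comm, Matrix.mul_assoc]
  have h1 : (S * (X * Dᵀ)).trace = (Xᵀ * S * D).trace := by
    rw [← Matrix.trace_transpose, Matrix.transpose_mul, Matrix.transpose_mul, hS',
      Matrix.transpose_transpose, Matrix.trace_mul_comm, h2]
  simp only [finner, hS', Matrix.mul_add, Matrix.trace_add, h1, h2, Matrix.transpose_mul]
  ring

end Matrices

lemma sub_smul_mul_transpose_sub_smul {ι κ R : Type*} [Fintype κ] [CommRing R]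
    (X D : Matrix ι κ R) (t : R) :
    (X - t • D) * (X - t • D)ᵀ = X * Xᵀ - t • (X * Dᵀ + D * Xᵀ) + t ^ 2 • (D * Dᵀ) := by
  simp only [Matrix.transpose_sub, Matrix.transpose_smul, Matrix.sub_mul, Matrix.mul_sub,
    Matrix.smul_mul, Matrix.mul_smul]
  module

lemma rank_mul_transpose_add_le {ι κ R : Type*} [Fintype ι] [Fintype κ] [CommRing R]
    [StrongRankCondition R] (X D : Matrix ι κ R) :
    (X * Dᵀ + D * Xᵀ).rank ≤ 2 * Fintype.card κ := by
  rw [← Matrix.fromCols_mul_fromRows]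
  calc _ ≤ (Matrix.fromCols X D).rank := Matrix.rank_mul_le_left _ _
    _ ≤ Fintype.card (κ ⊕ κ) := Matrix.rank_le_card_width _
    _ = 2 * Fintype.card κ := by rw [Fintype.card_sum, two_mul]

lemma rank_mul_transpose_le {ι κ R : Type*} [Fintype ι] [Fintype κ] [CommRing R]
    [StrongRankCondition R] (D : Matrix ι κ R) : (D * Dᵀ).rank ≤ Fintype.card κ :=
  (Matrix.rank_mul_le_left _ _).trans (Matrix.rank_le_card_width _)

section Measurements

variable {n m : ℕ} (A : Fin m → Matrix (Fin n) (Fin n) ℝ)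

lemma calA_add (M N : Matrix (Fin n) (Fin n) ℝ) : calA A (M + N) = calA A M + calA A N :=
  funext fun i => by simp [calA, finner, Matrix.mul_add]

lemma calA_sub (M N : Matrix (Fin n) (Fin n) ℝ) : calA A (M - N) = calA A M - calA A N :=
  funext fun i => by simp [calA, finner, Matrix.mul_sub]

lemma calA_smul (s : ℝ) (M : Matrix (Fin n) (Fin n) ℝ) : calA A (s • M) = s • calA A M :=
  funext fun i => by simp [calA, finner]

lemma RIP.abs_vinner_calA_le {k : ℕ} {δ : ℝ} (hA : RIP A k δ) {M N : Matrix (Fin n) (Fin n) ℝ}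
    (hM : M.rank ≤ k) (hN : N.rank ≤ k) :
    1 / (m : ℝ) * |vinner (calA A M) (calA A N)| ≤ (1 + δ) * fnorm M * fnorm N := by
  have hδ : 0 ≤ 1 + δ := by linarith [hA.1]
  have hsqrt : ∀ P : Matrix (Fin n) (Fin n) ℝ, P.rank ≤ k →
      √(1 / (m : ℝ)) * vnorm (calA A P) ≤ √(1 + δ) * fnorm P := fun P hP => by
    rw [← Real.sqrt_sq (vnorm_nonneg _), ← Real.sqrt_sq (fnorm_nonneg P),
      ← Real.sqrt_mul' _ (sq_nonneg _), ← Real.sqrt_mul' _ (sq_nonneg _)]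
    exact Real.sqrt_le_sqrt (hA.2.2 P hP).2
  calc 1 / (m : ℝ) * |vinner (calA A M) (calA A N)|
      ≤ 1 / (m : ℝ) * (vnorm (calA A M) * vnorm (calA A N)) := by
        gcongr; exact abs_vinner_le_vnorm_mul_vnorm _ _
    _ = (√(1 / (m : ℝ)) * vnorm (calA A M)) * (√(1 / (m : ℝ)) * vnorm (calA A N)) := by
        rw [mul_mul_mul_comm, Real.mul_self_sqrt (by positivity)]
    _ ≤ (√(1 + δ) * fnorm M) * (√(1 + δ) * fnorm N) :=
        mul_le_mul (hsqrt M hM) (hsqrt N hN)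
          (mul_nonneg (Real.sqrt_nonneg _) (vnorm_nonneg _))
          (mul_nonneg (Real.sqrt_nonneg _) (fnorm_nonneg M))
    _ = (1 + δ) * fnorm M * fnorm N := by
        rw [mul_mul_mul_comm, Real.mul_self_sqrt hδ, mul_assoc]

lemma finner_gradfc (hA : ∀ i, (A i).IsHermitian) {r : ℕ} (Mstar : Matrix (Fin n) (Fin n) ℝ)
    (X D : Matrix (Fin n) (Fin r) ℝ) :
    finner (gradfc A Mstar X) D =
      2 / (m : ℝ) * vinner (calA A (X * Xᵀ - Mstar)) (calA A (X * Dᵀ + D * Xᵀ)) := by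
  rw [gradfc, finner_smul_left, finner_sum_left, vinner, Finset.mul_sum, Finset.mul_sum]
  refine Finset.sum_congr rfl fun i _ => ?_
  rw [finner_smul_left, calA, calA, finner_mul_transpose_add (hA i)]
  ring

lemma fc_sub_smul (hA : ∀ i, (A i).IsHermitian) {r : ℕ} (Mstar : Matrix (Fin n) (Fin n) ℝ)
    (X D : Matrix (Fin n) (Fin r) ℝ) (t : ℝ) :
    fc A Mstar (X - t • D) =
      fc A Mstar X - t * finner (gradfc A Mstar X) D
        + (t ^ 2 / 2) *
          ((2 / (m : ℝ)) * (vnorm (calA A (X * Dᵀ + D * Xᵀ)) ^ 2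
            + 2 * vinner (calA A (X * Xᵀ - Mstar)) (calA A (D * Dᵀ))))
        - 2 * t ^ 3 / m * vinner (calA A (X * Dᵀ + D * Xᵀ)) (calA A (D * Dᵀ))
        + t ^ 4 / m * vnorm (calA A (D * Dᵀ)) ^ 2 := by
  have hres : (X - t • D) * (X - t • D)ᵀ - Mstar =
      (X * Xᵀ - Mstar) - t • (X * Dᵀ + D * Xᵀ) + t ^ 2 • (D * Dᵀ) := by
    rw [sub_smul_mul_transpose_sub_smul]
    abel
  rw [fc, fc, hres, calA_add, calA_sub, calA_smul, calA_smul, vnorm_sub_smul_add_smul_sq,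
    finner_gradfc A hA]
  ring

end Measurements

theorem descent_lemma_general {n m r : ℕ} {δ : ℝ}
    (A : Fin m → Matrix (Fin n) (Fin n) ℝ) (hA : ∀ i, (A i).IsHermitian)
    (hRIP : RIP A (2 * r) δ)
    (Mstar : Matrix (Fin n) (Fin n) ℝ)
    (X D : Matrix (Fin n) (Fin r) ℝ) (α : ℝ) (hα : 0 < α) :
    fc A Mstar (X - α • D) ≤
      fc A Mstar X - α * finner (gradfc A Mstar X) D
        + (α ^ 2 / 2) *
          ((2 / (m : ℝ)) * (vnorm (calA A (X * Dᵀ + D * Xᵀ)) ^ 2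
            + 2 * vinner (calA A (X * Xᵀ - Mstar)) (calA A (D * Dᵀ))))
        + (1 + δ) * α ^ 3 * fnorm D ^ 2 *
          (2 * fnorm (D * Xᵀ + X * Dᵀ) + α * fnorm D ^ 2) := by
  set B := X * Dᵀ + D * Xᵀ
  set C := D * Dᵀ
  have hδ : 0 ≤ 1 + δ := by linarith [hRIP.1]
  have hB : B.rank ≤ 2 * r := by simpa using rank_mul_transpose_add_le X D
  have hC : C.rank ≤ 2 * r := (rank_mul_transpose_le D).trans (by simp; omega)
  have hCD : fnorm C ≤ fnorm D ^ 2 := fnorm_mul_transpose_le D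
  have hcubic : -(1 / m * vinner (calA A B) (calA A C)) ≤ (1 + δ) * fnorm B * fnorm D ^ 2 :=
    calc -(1 / m * vinner (calA A B) (calA A C)) ≤ 1 / m * |vinner (calA A B) (calA A C)| := by
          rw [← mul_neg]; gcongr; exact neg_le_abs _
      _ ≤ (1 + δ) * fnorm B * fnorm C := hRIP.abs_vinner_calA_le A hB hC
      _ ≤ (1 + δ) * fnorm B * fnorm D ^ 2 := by gcongr; exact mul_nonneg hδ (fnorm_nonneg B)
  have hquartic : 1 / m * vnorm (calA A C) ^ 2 ≤ (1 + δ) * (fnorm D ^ 2) ^ 2 :=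
    (hRIP.2.2 C hC).2.trans (by gcongr; exact fnorm_nonneg C)
  have hα3 := mul_le_mul_of_nonneg_left hcubic (by positivity : (0 : ℝ) ≤ 2 * α ^ 3)
  have hα4 := mul_le_mul_of_nonneg_left hquartic (by positivity : (0 : ℝ) ≤ α ^ 4)
  rw [fc_sub_smul A hA, add_comm (D * Xᵀ)]
  linear_combination hα3 + hα4

/-- fourth-order descent lemma under RIP. -/
theorem descent_lemma {n m r rstar : ℕ} (hn : 0 < n) (hm : 0 < m)
    (hrstar : 0 < rstar) (hrr : rstar ≤ r) {δ : ℝ}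
    (A : Fin m → Matrix (Fin n) (Fin n) ℝ) (hA : ∀ i, (A i).IsHermitian)
    (hRIP : RIP A (2 * r) δ)
    (Mstar : Matrix (Fin n) (Fin n) ℝ) (hM : Mstar.PosSemidef)
    (hrank : Mstar.rank = rstar)
    (X D : Matrix (Fin n) (Fin r) ℝ) (α : ℝ) (hα : 0 < α) :
    fc A Mstar (X - α • D) ≤
      fc A Mstar X - α * finner (gradfc A Mstar X) D
        + (α ^ 2 / 2) *
          ((2 / (m : ℝ)) * (vnorm (calA A (X * Dᵀ + D * Xᵀ)) ^ 2
            + 2 * vinner (calA A (X * Xᵀ - Mstar)) (calA A (D * Dᵀ))))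
        + (1 + δ) * α ^ 3 * fnorm D ^ 2 *
          (2 * fnorm (D * Xᵀ + X * Dᵀ) + α * fnorm D ^ 2) :=
  descent_lemma_general A hA hRIP Mstar X D α hα

end
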